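/- arXiv:2310.11254 — 9 statements merged into one kernel-verified Lean document; each statement's English description precedes it below -/
import Mathlib

section
/- Let G be a finite simple graph whose vertex set is A ∪ B with A ∩ B = {u}, such that G has no edge between A ∖ {u} and B ∖ {u}; let G₁ = G[A] and G₂ = G[B] be the induced subgraphs. If both (G₁,u) and (G₂,u) act as AB, then γ(G) = s(G₁,u) + s(G₂,u) − 1. -/
/-- `S` is a dominating set of the finite simple graph `G`. -/
def DomSet {V : Type*} (G : SimpleGraph V) (S : Finset V) : Prop :=
  ∀ v : V, v ∈ S ∨ ∃ w ∈ S, G.Adj w v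

/-- `γ(G)`: the minimum size of a dominating set of `G`. -/
noncomputable def gamma {V : Type*} [Fintype V] (G : SimpleGraph V) : ℕ :=
  sInf {n | ∃ S : Finset V, DomSet G S ∧ S.card = n}

/-- `S` is a rooted dominating set of the induced subgraph `G[A]` with root `u`:
`S ⊆ A` and every vertex of `A` other than `u` is in `S` or adjacent (within `A`)
to a vertex of `S`. -/
def RootedDomSetIn {V : Type*} (G : SimpleGraph V) (A : Finset V) (u : V)
    (S : Finset V) : Prop :=
  S ⊆ A ∧ ∀ v ∈ A, v ≠ u → (v ∈ S ∨ ∃ w ∈ S, G.Adj w v)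

/-- `s(G[A], u)`: the minimum size of a rooted dominating set of `(G[A], u)`. -/
noncomputable def sIn {V : Type*} (G : SimpleGraph V) (A : Finset V) (u : V) : ℕ :=
  sInf {n | ∃ S : Finset V, RootedDomSetIn G A u S ∧ S.card = n}

/-- `(G[A], u)` acts as AB: some minimum rooted dominating set contains `u`. -/
def ActsAB {V : Type*} (G : SimpleGraph V) (A : Finset V) (u : V) : Prop :=
  ∃ S : Finset V, RootedDomSetIn G A u S ∧ S.card = sIn G A u ∧ u ∈ S

/-- `(G[A], u)` acts as LR: it does not act as AB, but some minimum rooted dominating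
set dominates `u`. -/
def ActsLR {V : Type*} (G : SimpleGraph V) (A : Finset V) (u : V) : Prop :=
  ¬ ActsAB G A u ∧
    ∃ S : Finset V, RootedDomSetIn G A u S ∧ S.card = sIn G A u ∧
      (u ∈ S ∨ ∃ w ∈ S, G.Adj w u)

/-- `(G[A], u)` acts as Nope: neither AB nor LR. -/
def ActsNope {V : Type*} (G : SimpleGraph V) (A : Finset V) (u : V) : Prop :=
  ¬ ActsAB G A u ∧ ¬ ActsLR G A u

private lemma restrict_lemma {V : Type*} [Fintype V] [DecidableEq V] (G : SimpleGraph V)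
    (A B : Finset V) (u : V)
    (hcover : A ∪ B = Finset.univ) (hinter : A ∩ B = {u})
    (hsep : ∀ a ∈ A, ∀ b ∈ B, a ≠ u → b ≠ u → ¬ G.Adj a b)
    (S : Finset V) (hS : DomSet G S) :
    RootedDomSetIn G A u (S ∩ A) := by
  refine ⟨Finset.inter_subset_right, ?_⟩
  intro v hv hvu
  rcases hS v with h | ⟨w, hwS, hadj⟩
  · left; exact Finset.mem_inter.2 ⟨h, hv⟩
  · right
    refine ⟨w, Finset.mem_inter.2 ⟨hwS, ?_⟩, hadj⟩
    by_cases hwu : w = u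
    · rw [hwu]
      have hm : u ∈ A ∩ B := hinter ▸ Finset.mem_singleton_self u
      exact (Finset.mem_inter.1 hm).1
    · have hw : w ∈ A ∪ B := hcover ▸ Finset.mem_univ w
      rcases Finset.mem_union.1 hw with h | h
      · exact h
      · exact absurd hadj.symm (hsep v hv w h hvu hwu)

/-- The 'both AB' case of the Fusing replacement lemma (Lemma 2):
if `G` is obtained by gluing `G₁ = G[A]` and `G₂ = G[B]` at the single vertex `u`
and both sides act as AB, then `γ(G) = s(G₁,u) + s(G₂,u) − 1`. -/
theorem stmt0 {V : Type*} [Fintype V] [DecidableEq V] (G : SimpleGraph V)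
    (A B : Finset V) (u : V)
    (hcover : A ∪ B = Finset.univ) (hinter : A ∩ B = {u})
    (hsep : ∀ a ∈ A, ∀ b ∈ B, a ≠ u → b ≠ u → ¬ G.Adj a b)
    (h₁ : ActsAB G A u) (h₂ : ActsAB G B u) :
    gamma G + 1 = sIn G A u + sIn G B u := by
  obtain ⟨S₁, hS₁, hc₁, hu₁⟩ := h₁
  obtain ⟨S₂, hS₂, hc₂, hu₂⟩ := h₂
  have huAB : u ∈ A ∩ B := hinter ▸ Finset.mem_singleton_self u
  have huA : u ∈ A := (Finset.mem_inter.1 huAB).1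
  have huB : u ∈ B := (Finset.mem_inter.1 huAB).2
  -- upper bound
  have hdom : DomSet G (S₁ ∪ S₂) := by
    intro v
    have hv : v ∈ A ∪ B := hcover ▸ Finset.mem_univ v
    by_cases hvu : v = u
    · subst hvu; exact Or.inl (Finset.mem_union_left _ hu₁)
    rcases Finset.mem_union.1 hv with h | h
    · rcases hS₁.2 v h hvu with h' | ⟨w, hw, hadj⟩
      · exact Or.inl (Finset.mem_union_left _ h')
      · exact Or.inr ⟨w, Finset.mem_union_left _ hw, hadj⟩
    · rcases hS₂.2 v h hvu with h' | ⟨w, hw, hadj⟩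
      · exact Or.inl (Finset.mem_union_right _ h')
      · exact Or.inr ⟨w, Finset.mem_union_right _ hw, hadj⟩
  have hint : S₁ ∩ S₂ = {u} := by
    apply Finset.Subset.antisymm
    · intro x hx
      have hx' := Finset.mem_inter.1 hx
      have hm : x ∈ A ∩ B := Finset.mem_inter.2 ⟨hS₁.1 hx'.1, hS₂.1 hx'.2⟩
      rwa [hinter] at hm
    · intro x hx
      rw [Finset.mem_singleton] at hx; subst hx
      exact Finset.mem_inter.2 ⟨hu₁, hu₂⟩
  have hcardU : (S₁ ∪ S₂).card + 1 = S₁.card + S₂.card := by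
    have h := Finset.card_union_add_card_inter S₁ S₂
    rw [hint] at h; simpa using h
  have hup : gamma G ≤ (S₁ ∪ S₂).card := Nat.sInf_le ⟨_, hdom, rfl⟩
  -- lower bound
  have hne : {n | ∃ S : Finset V, DomSet G S ∧ S.card = n}.Nonempty :=
    ⟨Finset.univ.card, Finset.univ, fun v => Or.inl (Finset.mem_univ v), rfl⟩
  obtain ⟨S, hS, hScard⟩ := Nat.sInf_mem hne
  have hScard' : S.card = gamma G := hScard
  have hA := restrict_lemma G A B u hcover hinter hsep S hS
  have hB := restrict_lemma G B A u (by rw [Finset.union_comm]; exact hcover)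
    (by rw [Finset.inter_comm]; exact hinter)
    (fun b hb a ha hbu hau h => hsep a ha b hb hau hbu h.symm) S hS
  have l1 : sIn G A u ≤ (S ∩ A).card := Nat.sInf_le ⟨_, hA, rfl⟩
  have l2 : sIn G B u ≤ (S ∩ B).card := Nat.sInf_le ⟨_, hB, rfl⟩
  have hsum : (S ∩ A).card + (S ∩ B).card ≤ S.card + 1 := by
    have h1 : (S ∩ A) ∪ (S ∩ B) = S := by
      rw [← Finset.inter_union_distrib_left, hcover, Finset.inter_univ]
    have h2 : (S ∩ A) ∩ (S ∩ B) ⊆ {u} := by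
      intro x hx
      simp only [Finset.mem_inter] at hx
      rw [← hinter]; exact Finset.mem_inter.2 ⟨hx.1.2, hx.2.2⟩
    have h3 : ((S ∩ A) ∩ (S ∩ B)).card ≤ 1 :=
      le_trans (Finset.card_le_card h2) (by simp)
    have h := Finset.card_union_add_card_inter (S ∩ A) (S ∩ B)
    rw [h1] at h; omega
  omega
end

section
/- Let G be a finite simple graph whose vertex set is A ∪ B with A ∩ B = {u}, such that G has no edge between A ∖ {u} and B ∖ {u}; let G₁ = G[A] and G₂ = G[B] be the induced subgraphs. If both (G₁,u) and (G₂,u) act as Nope, then γ(G) = s(G₁,u) + s(G₂,u) + 1. -/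
/-- The 'both Nope' case of the Fusing replacement lemma (Lemma 2):
if `G` is obtained by gluing `G₁ = G[A]` and `G₂ = G[B]` at the single vertex `u`
and both sides act as Nope, then `γ(G) = s(G₁,u) + s(G₂,u) + 1`. -/
theorem stmt1 {V : Type*} [Fintype V] [DecidableEq V] (G : SimpleGraph V)
    (A B : Finset V) (u : V)
    (hcover : A ∪ B = Finset.univ) (hinter : A ∩ B = {u})
    (hsep : ∀ a ∈ A, ∀ b ∈ B, a ≠ u → b ≠ u → ¬ G.Adj a b)
    (h₁ : ActsNope G A u) (h₂ : ActsNope G B u) :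
    gamma G = sIn G A u + sIn G B u + 1 := by
  classical
  have huAB : u ∈ A ∩ B := hinter ▸ Finset.mem_singleton_self u
  have huA : u ∈ A := (Finset.mem_inter.mp huAB).1
  have huB : u ∈ B := (Finset.mem_inter.mp huAB).2
  -- closure properties
  have hsideA : ∀ v ∈ A, v ≠ u → ∀ w, G.Adj w v → w ∈ A := by
    intro v hv hvu w hadj
    by_contra hwA
    have hwB : w ∈ B := by
      have : w ∈ A ∪ B := hcover ▸ Finset.mem_univ w
      rcases Finset.mem_union.mp this with h | h
      · exact absurd h hwA
      · exact h
    have hwu : w ≠ u := fun h => hwA (h ▸ huA)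
    exact hsep v hv w hwB hvu hwu hadj.symm
  have hsideB : ∀ v ∈ B, v ≠ u → ∀ w, G.Adj w v → w ∈ B := by
    intro v hv hvu w hadj
    by_contra hwB
    have hwA : w ∈ A := by
      have : w ∈ A ∪ B := hcover ▸ Finset.mem_univ w
      rcases Finset.mem_union.mp this with h | h
      · exact h
      · exact absurd h hwB
    have hwu : w ≠ u := fun h => hwB (h ▸ huB)
    exact hsep w hwA v hv hwu hvu hadj
  -- intersections of dominating sets are rooted dominating sets
  have rooted_inter : ∀ (C : Finset V), (∀ v ∈ C, v ≠ u → ∀ w, G.Adj w v → w ∈ C) →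
      ∀ D : Finset V, DomSet G D → RootedDomSetIn G C u (D ∩ C) := by
    intro C hside D hD
    refine ⟨Finset.inter_subset_right, ?_⟩
    intro v hv hvu
    rcases hD v with h | ⟨w, hw, hadj⟩
    · exact Or.inl (Finset.mem_inter.mpr ⟨h, hv⟩)
    · exact Or.inr ⟨w, Finset.mem_inter.mpr ⟨hw, hside v hv hvu w hadj⟩, hadj⟩
  -- existence of minimum rooted dominating sets
  have neA : {n | ∃ S : Finset V, RootedDomSetIn G A u S ∧ S.card = n}.Nonempty :=
    ⟨A.card, A, ⟨subset_rfl, fun v hv _ => Or.inl hv⟩, rfl⟩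
  have neB : {n | ∃ S : Finset V, RootedDomSetIn G B u S ∧ S.card = n}.Nonempty :=
    ⟨B.card, B, ⟨subset_rfl, fun v hv _ => Or.inl hv⟩, rfl⟩
  obtain ⟨S₁, hS₁, hS₁card⟩ := Nat.sInf_mem neA
  obtain ⟨S₂, hS₂, hS₂card⟩ := Nat.sInf_mem neB
  have huS₁ : u ∉ S₁ := fun h => h₁.1 ⟨S₁, hS₁, hS₁card, h⟩
  have huS₂ : u ∉ S₂ := fun h => h₂.1 ⟨S₂, hS₂, hS₂card, h⟩
  -- the lower bound: every dominating set has card ≥ s₁ + s₂ + 1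
  have lower : ∀ D : Finset V, DomSet G D →
      sIn G A u + sIn G B u + 1 ≤ D.card := by
    intro D hD
    set DA := D ∩ A with hDA
    set DB := D ∩ B with hDB
    have rA : RootedDomSetIn G A u DA := rooted_inter A hsideA D hD
    have rB : RootedDomSetIn G B u DB := rooted_inter B hsideB D hD
    have hleA : sIn G A u ≤ DA.card := Nat.sInf_le ⟨DA, rA, rfl⟩
    have hleB : sIn G B u ≤ DB.card := Nat.sInf_le ⟨DB, rB, rfl⟩
    have hunion : DA ∪ DB = D := by
      rw [hDA, hDB, ← Finset.inter_union_distrib_left, hcover, Finset.inter_univ]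
    have hinter2 : DA ∩ DB = D ∩ {u} := by
      rw [← hinter]
      ext x
      simp only [hDA, hDB, Finset.mem_inter]
      tauto
    have hcards : (DA ∩ DB).card + (DA ∪ DB).card = DA.card + DB.card :=
      Finset.card_inter_add_card_union DA DB
    by_cases huD : u ∈ D
    · -- u ∈ D: both intersections strictly exceed the minima
      have hneA : DA.card ≠ sIn G A u := fun h =>
        h₁.1 ⟨DA, rA, h, Finset.mem_inter.mpr ⟨huD, huA⟩⟩
      have hneB : DB.card ≠ sIn G B u := fun h =>
        h₂.1 ⟨DB, rB, h, Finset.mem_inter.mpr ⟨huD, huB⟩⟩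
      have hcap : (DA ∩ DB).card = 1 := by
        rw [hinter2]
        have : D ∩ {u} = {u} := by
          ext x; simp only [Finset.mem_inter, Finset.mem_singleton]
          constructor
          · exact fun h => h.2
          · rintro rfl; exact ⟨huD, rfl⟩
        rw [this, Finset.card_singleton]
      rw [hunion, hcap] at hcards
      omega
    · -- u ∉ D: u is dominated from one side, that side strictly exceeds
      have hcap : (DA ∩ DB).card = 0 := by
        rw [hinter2]
        have : D ∩ {u} = ∅ := by
          ext x; simp only [Finset.mem_inter, Finset.mem_singleton,
            Finset.notMem_empty, iff_false, not_and]
          rintro h rfl; exact huD h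
        rw [this, Finset.card_empty]
      rw [hunion, hcap] at hcards
      rcases hD u with h | ⟨w, hw, hadj⟩
      · exact absurd h huD
      · have hwAB : w ∈ A ∪ B := hcover ▸ Finset.mem_univ w
        rcases Finset.mem_union.mp hwAB with hwA | hwB
        · have hdom : u ∈ DA ∨ ∃ x ∈ DA, G.Adj x u :=
            Or.inr ⟨w, Finset.mem_inter.mpr ⟨hw, hwA⟩, hadj⟩
          have hneA : DA.card ≠ sIn G A u := fun h =>
            h₁.2 ⟨h₁.1, DA, rA, h, hdom⟩
          omega
        · have hdom : u ∈ DB ∨ ∃ x ∈ DB, G.Adj x u :=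
            Or.inr ⟨w, Finset.mem_inter.mpr ⟨hw, hwB⟩, hadj⟩
          have hneB : DB.card ≠ sIn G B u := fun h =>
            h₂.2 ⟨h₂.1, DB, rB, h, hdom⟩
          omega
  -- the upper bound: S₁ ∪ S₂ ∪ {u} dominates G
  have hdomD : DomSet G (insert u (S₁ ∪ S₂)) := by
    intro v
    by_cases hvu : v = u
    · subst hvu; exact Or.inl (Finset.mem_insert_self _ _)
    · have hvAB : v ∈ A ∪ B := hcover ▸ Finset.mem_univ v
      rcases Finset.mem_union.mp hvAB with hvA | hvB
      · rcases hS₁.2 v hvA hvu with h | ⟨w, hw, hadj⟩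
        · exact Or.inl (Finset.mem_insert_of_mem (Finset.mem_union_left _ h))
        · exact Or.inr ⟨w, Finset.mem_insert_of_mem (Finset.mem_union_left _ hw), hadj⟩
      · rcases hS₂.2 v hvB hvu with h | ⟨w, hw, hadj⟩
        · exact Or.inl (Finset.mem_insert_of_mem (Finset.mem_union_right _ h))
        · exact Or.inr ⟨w, Finset.mem_insert_of_mem (Finset.mem_union_right _ hw), hadj⟩
  have hcardD : (insert u (S₁ ∪ S₂)).card ≤ sIn G A u + sIn G B u + 1 := by
    calc (insert u (S₁ ∪ S₂)).card ≤ (S₁ ∪ S₂).card + 1 := Finset.card_insert_le _ _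
    _ ≤ S₁.card + S₂.card + 1 := by
        have := Finset.card_union_le S₁ S₂; omega
    _ = sIn G A u + sIn G B u + 1 := by rw [sIn, sIn, hS₁card, hS₂card]
  -- conclude
  have hγle : gamma G ≤ sIn G A u + sIn G B u + 1 :=
    le_trans (Nat.sInf_le ⟨insert u (S₁ ∪ S₂), hdomD, rfl⟩) hcardD
  have neG : {n | ∃ S : Finset V, DomSet G S ∧ S.card = n}.Nonempty :=
    ⟨Finset.univ.card, Finset.univ, fun v => Or.inl (Finset.mem_univ v), rfl⟩
  obtain ⟨D, hD, hDcard⟩ := Nat.sInf_mem neG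
  have hg : gamma G = D.card := hDcard.symm
  have hγge : sIn G A u + sIn G B u + 1 ≤ gamma G := hg ▸ lower D hD
  omega
end

section
/- Let G be a finite simple graph whose vertex set is A ∪ B with A ∩ B = {u}, such that G has no edge between A ∖ {u} and B ∖ {u}; let G₁ = G[A] and G₂ = G[B] be the induced subgraphs. If it is not the case that both (G₁,u) and (G₂,u) act as AB, and not the case that both act as Nope, then γ(G) = s(G₁,u) + s(G₂,u). -/
set_option linter.unusedSectionVars false
set_option linter.unusedVariables false

section Aux
variable {V : Type*} [Fintype V] [DecidableEq V]

lemma rooted_dom_self (G : SimpleGraph V) (A : Finset V) (u : V) :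
    RootedDomSetIn G A u A := ⟨subset_rfl, fun v hv _ => Or.inl hv⟩

lemma sIn_le (G : SimpleGraph V) (A : Finset V) (u : V) {S : Finset V}
    (h : RootedDomSetIn G A u S) : sIn G A u ≤ S.card :=
  Nat.sInf_le ⟨S, h, rfl⟩

lemma exists_sIn (G : SimpleGraph V) (A : Finset V) (u : V) :
    ∃ S : Finset V, RootedDomSetIn G A u S ∧ S.card = sIn G A u := by
  have h := Nat.sInf_mem (⟨A.card, A, rooted_dom_self G A u, rfl⟩ :
    {n | ∃ S : Finset V, RootedDomSetIn G A u S ∧ S.card = n}.Nonempty)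
  obtain ⟨S, h1, h2⟩ := h
  exact ⟨S, h1, h2⟩

lemma gamma_le (G : SimpleGraph V) {S : Finset V} (h : DomSet G S) :
    gamma G ≤ S.card := Nat.sInf_le ⟨S, h, rfl⟩

lemma exists_gamma (G : SimpleGraph V) :
    ∃ S : Finset V, DomSet G S ∧ S.card = gamma G := by
  have h := Nat.sInf_mem (⟨(Finset.univ : Finset V).card, Finset.univ,
    fun v => Or.inl (Finset.mem_univ v), rfl⟩ :
    {n | ∃ S : Finset V, DomSet G S ∧ S.card = n}.Nonempty)
  obtain ⟨S, h1, h2⟩ := h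
  exact ⟨S, h1, h2⟩

/-- Restriction of a dominating set to a "closed" side. -/
lemma restrict_dom (G : SimpleGraph V) (A : Finset V) (u : V) (D : Finset V)
    (hD : DomSet G D)
    (hclosed : ∀ v ∈ A, v ≠ u → ∀ w, G.Adj w v → w ∈ A) :
    RootedDomSetIn G A u (D ∩ A) := by
  refine ⟨Finset.inter_subset_right, fun v hv hvu => ?_⟩
  rcases hD v with h | ⟨w, hw, hadj⟩
  · exact Or.inl (Finset.mem_inter.2 ⟨h, hv⟩)
  · exact Or.inr ⟨w, Finset.mem_inter.2 ⟨hw, hclosed v hv hvu w hadj⟩, hadj⟩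

/-- From ¬Nope get a minimum rooted dominating set that dominates u. -/
lemma notNope (G : SimpleGraph V) (A : Finset V) (u : V) (h : ¬ ActsNope G A u) :
    ∃ S : Finset V, RootedDomSetIn G A u S ∧ S.card = sIn G A u ∧
      (u ∈ S ∨ ∃ w ∈ S, G.Adj w u) := by
  rw [ActsNope, not_and_or, not_not, not_not] at h
  rcases h with ⟨S, hS, hc, hu⟩ | ⟨_, S, hS, hc, hu⟩
  · exact ⟨S, hS, hc, Or.inl hu⟩
  · exact ⟨S, hS, hc, hu⟩

/-- Upper-bound gluing. -/
lemma glue_dom (G : SimpleGraph V) (A B : Finset V) (u : V)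
    (hcover : A ∪ B = Finset.univ)
    {S₁ S₂ : Finset V} (h₁ : RootedDomSetIn G A u S₁) (h₂ : RootedDomSetIn G B u S₂)
    (hu : u ∈ S₁ ∨ ∃ w ∈ S₁, G.Adj w u) :
    DomSet G (S₁ ∪ S₂) := by
  intro v
  by_cases hvu : v = u
  · subst hvu
    rcases hu with h | ⟨w, hw, hadj⟩
    · exact Or.inl (Finset.mem_union_left _ h)
    · exact Or.inr ⟨w, Finset.mem_union_left _ hw, hadj⟩
  · have hv : v ∈ A ∪ B := hcover ▸ Finset.mem_univ v
    rcases Finset.mem_union.1 hv with hvA | hvB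
    · rcases h₁.2 v hvA hvu with h | ⟨w, hw, hadj⟩
      · exact Or.inl (Finset.mem_union_left _ h)
      · exact Or.inr ⟨w, Finset.mem_union_left _ hw, hadj⟩
    · rcases h₂.2 v hvB hvu with h | ⟨w, hw, hadj⟩
      · exact Or.inl (Finset.mem_union_right _ h)
      · exact Or.inr ⟨w, Finset.mem_union_right _ hw, hadj⟩
end Aux

/-- The mixed case (`c = 0`) of the Fusing replacement lemma (Lemma 2):
if `G` is obtained by gluing `G₁ = G[A]` and `G₂ = G[B]` at the single vertex `u`,
it is not the case that both sides act as AB, and not the case that both act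
as Nope, then `γ(G) = s(G₁,u) + s(G₂,u)`. -/

theorem stmt2 {V : Type*} [Fintype V] [DecidableEq V] (G : SimpleGraph V)
    (A B : Finset V) (u : V)
    (hcover : A ∪ B = Finset.univ) (hinter : A ∩ B = {u})
    (hsep : ∀ a ∈ A, ∀ b ∈ B, a ≠ u → b ≠ u → ¬ G.Adj a b)
    (h₁ : ¬ (ActsAB G A u ∧ ActsAB G B u))
    (h₂ : ¬ (ActsNope G A u ∧ ActsNope G B u)) :
    gamma G = sIn G A u + sIn G B u := by
  -- basic facts about u
  have huA : u ∈ A := by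
    have : u ∈ A ∩ B := by rw [hinter]; exact Finset.mem_singleton_self u
    exact (Finset.mem_inter.1 this).1
  have huB : u ∈ B := by
    have : u ∈ A ∩ B := by rw [hinter]; exact Finset.mem_singleton_self u
    exact (Finset.mem_inter.1 this).2
  -- closure of each side
  have closedA : ∀ v ∈ A, v ≠ u → ∀ w, G.Adj w v → w ∈ A := by
    intro v hv hvu w hadj
    by_contra hwA
    have hwB : w ∈ B := by
      have hw : w ∈ A ∪ B := hcover ▸ Finset.mem_univ w
      rcases Finset.mem_union.1 hw with h | h
      · exact absurd h hwA
      · exact h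
    have hwu : w ≠ u := fun h => hwA (h ▸ huA)
    exact hsep v hv w hwB hvu hwu hadj.symm
  have closedB : ∀ v ∈ B, v ≠ u → ∀ w, G.Adj w v → w ∈ B := by
    intro v hv hvu w hadj
    by_contra hwB
    have hwA : w ∈ A := by
      have hw : w ∈ A ∪ B := hcover ▸ Finset.mem_univ w
      rcases Finset.mem_union.1 hw with h | h
      · exact h
      · exact absurd h hwB
    have hwu : w ≠ u := fun h => hwB (h ▸ huB)
    exact hsep w hwA v hv hwu hvu hadj
  -- lower bound: sIn A + sIn B ≤ gamma
  have hlow : sIn G A u + sIn G B u ≤ gamma G := by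
    obtain ⟨D, hD, hDcard⟩ := exists_gamma G
    have hA := restrict_dom G A u D hD closedA
    have hB := restrict_dom G B u D hD closedB
    have hleA : sIn G A u ≤ (D ∩ A).card := sIn_le G A u hA
    have hleB : sIn G B u ≤ (D ∩ B).card := sIn_le G B u hB
    have hunion : (D ∩ A) ∪ (D ∩ B) = D := by
      rw [← Finset.inter_union_distrib_left, hcover, Finset.inter_univ]
    have hint : (D ∩ A) ∩ (D ∩ B) = D ∩ {u} := by
      rw [Finset.inter_inter_inter_comm, Finset.inter_self, hinter]
    have hsplit := Finset.card_union_add_card_inter (D ∩ A) (D ∩ B)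
    rw [hunion, hint] at hsplit
    by_cases hu : u ∈ D
    · have h1 : (D ∩ {u}).card = 1 := by
        rw [show D ∩ {u} = {u} from by
          ext x
          simp only [Finset.mem_inter, Finset.mem_singleton]
          exact ⟨fun h => h.2, fun h => ⟨h ▸ hu, h⟩⟩]
        exact Finset.card_singleton u
      rw [h1] at hsplit
      by_contra hlt
      push_neg at hlt
      rw [← hDcard] at hlt
      have heqA : (D ∩ A).card = sIn G A u := by omega
      have heqB : (D ∩ B).card = sIn G B u := by omega
      exact h₁ ⟨⟨D ∩ A, hA, heqA, Finset.mem_inter.2 ⟨hu, huA⟩⟩,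
        ⟨D ∩ B, hB, heqB, Finset.mem_inter.2 ⟨hu, huB⟩⟩⟩
    · have h0 : (D ∩ {u}).card = 0 := by
        rw [Finset.card_eq_zero]
        ext x
        simp only [Finset.mem_inter, Finset.mem_singleton, Finset.notMem_empty,
          iff_false, not_and]
        intro hx hxu; exact hu (hxu ▸ hx)
      rw [h0] at hsplit
      omega
  -- upper bound
  have hcoverBA : B ∪ A = Finset.univ := by rw [Finset.union_comm]; exact hcover
  have hup : gamma G ≤ sIn G A u + sIn G B u := by
    rw [ActsNope, ActsNope, not_and_or] at h₂
    rcases h₂ with hnA | hnB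
    · obtain ⟨S₁, hS₁, hc₁, hu₁⟩ := notNope G A u (by
        rw [ActsNope]; exact fun h => hnA h)
      obtain ⟨S₂, hS₂, hc₂⟩ := exists_sIn G B u
      have hdom := glue_dom G A B u hcover hS₁ hS₂ hu₁
      calc gamma G ≤ (S₁ ∪ S₂).card := gamma_le G hdom
        _ ≤ S₁.card + S₂.card := Finset.card_union_le _ _
        _ = sIn G A u + sIn G B u := by rw [hc₁, hc₂]
    · obtain ⟨S₂, hS₂, hc₂, hu₂⟩ := notNope G B u (by
        rw [ActsNope]; exact fun h => hnB h)
      obtain ⟨S₁, hS₁, hc₁⟩ := exists_sIn G A u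
      have hdom := glue_dom G B A u hcoverBA hS₂ hS₁ hu₂
      calc gamma G ≤ (S₂ ∪ S₁).card := gamma_le G hdom
        _ ≤ S₂.card + S₁.card := Finset.card_union_le _ _
        _ = sIn G A u + sIn G B u := by rw [hc₁, hc₂, Nat.add_comm]
  omega
end

section
/- Let G be a finite simple graph with an edge {u,v} whose vertex set is the disjoint union A ⊔ B with u ∈ A and v ∈ B, such that {u,v} is the only edge of G between A and B (i.e. {u,v} is a bridge); let G₁ = G[A] and G₂ = G[B]. If (G₁,u) acts as AB or (G₂,v) acts as AB, then γ(G) = s(G₁,u) + s(G₂,v). -/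
lemma key {V : Type*} [Fintype V] [DecidableEq V] (G : SimpleGraph V)
    (A B : Finset V) (u v : V)
    (hdisj : Disjoint A B) (hcover : A ∪ B = Finset.univ)
    (hu : u ∈ A) (hv : v ∈ B) (huv : G.Adj u v)
    (hbridge : ∀ a ∈ A, ∀ b ∈ B, G.Adj a b → a = u ∧ b = v)
    (hAB : ActsAB G A u) :
    gamma G = sIn G A u + sIn G B v := by
  obtain ⟨S₁, hS₁, hc₁, huS₁⟩ := hAB
  have hSB : {n | ∃ S : Finset V, RootedDomSetIn G B v S ∧ S.card = n}.Nonempty :=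
    ⟨B.card, B, ⟨le_refl _, fun w hw _ => Or.inl hw⟩, rfl⟩
  obtain ⟨S₂, hS₂, hc₂⟩ := Nat.sInf_mem hSB
  have hc₂ : S₂.card = sIn G B v := hc₂
  have memAB : ∀ w : V, w ∈ A ∨ w ∈ B := by
    intro w
    have : w ∈ A ∪ B := by rw [hcover]; exact Finset.mem_univ w
    exact Finset.mem_union.mp this
  apply le_antisymm
  · -- gamma ≤ s₁ + s₂
    have hdom : DomSet G (S₁ ∪ S₂) := by
      intro w
      rcases memAB w with hw | hw
      · by_cases hwu : w = u
        · exact Or.inl (Finset.mem_union.mpr (Or.inl (hwu ▸ huS₁)))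
        · rcases hS₁.2 w hw hwu with h1 | ⟨x, hx, hadj⟩
          · exact Or.inl (Finset.mem_union.mpr (Or.inl h1))
          · exact Or.inr ⟨x, Finset.mem_union.mpr (Or.inl hx), hadj⟩
      · by_cases hwv : w = v
        · exact Or.inr ⟨u, Finset.mem_union.mpr (Or.inl huS₁), hwv ▸ huv⟩
        · rcases hS₂.2 w hw hwv with h1 | ⟨x, hx, hadj⟩
          · exact Or.inl (Finset.mem_union.mpr (Or.inr h1))
          · exact Or.inr ⟨x, Finset.mem_union.mpr (Or.inr hx), hadj⟩
    have hdisjS : Disjoint S₁ S₂ :=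
      Finset.disjoint_of_subset_left hS₁.1 (Finset.disjoint_of_subset_right hS₂.1 hdisj)
    have := Nat.sInf_le (s := {n | ∃ S : Finset V, DomSet G S ∧ S.card = n})
      ⟨S₁ ∪ S₂, hdom, rfl⟩
    rwa [Finset.card_union_of_disjoint hdisjS, hc₁, hc₂] at this
  · -- s₁ + s₂ ≤ gamma
    have hSγ : {n | ∃ S : Finset V, DomSet G S ∧ S.card = n}.Nonempty :=
      ⟨(Finset.univ : Finset V).card, Finset.univ, fun w => Or.inl (Finset.mem_univ w), rfl⟩
    obtain ⟨S, hS, hcS⟩ := Nat.sInf_mem hSγ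
    have hcS : S.card = gamma G := hcS
    have hA' : RootedDomSetIn G A u (S ∩ A) := by
      refine ⟨Finset.inter_subset_right, fun a ha hau => ?_⟩
      rcases hS a with h1 | ⟨x, hx, hadj⟩
      · exact Or.inl (Finset.mem_inter.mpr ⟨h1, ha⟩)
      · rcases memAB x with hxA | hxB
        · exact Or.inr ⟨x, Finset.mem_inter.mpr ⟨hx, hxA⟩, hadj⟩
        · exact absurd (hbridge a ha x hxB hadj.symm).1 hau
    have hB' : RootedDomSetIn G B v (S ∩ B) := by
      refine ⟨Finset.inter_subset_right, fun b hb hbv => ?_⟩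
      rcases hS b with h1 | ⟨x, hx, hadj⟩
      · exact Or.inl (Finset.mem_inter.mpr ⟨h1, hb⟩)
      · rcases memAB x with hxA | hxB
        · exact absurd (hbridge x hxA b hb hadj).2 hbv
        · exact Or.inr ⟨x, Finset.mem_inter.mpr ⟨hx, hxB⟩, hadj⟩
    have h1 : sIn G A u ≤ (S ∩ A).card := Nat.sInf_le ⟨S ∩ A, hA', rfl⟩
    have h2 : sIn G B v ≤ (S ∩ B).card := Nat.sInf_le ⟨S ∩ B, hB', rfl⟩
    have hdisjS : Disjoint (S ∩ A) (S ∩ B) :=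
      Finset.disjoint_of_subset_left Finset.inter_subset_right
        (Finset.disjoint_of_subset_right Finset.inter_subset_right hdisj)
    have hun : (S ∩ A) ∪ (S ∩ B) = S := by
      rw [← Finset.inter_union_distrib_left, hcover, Finset.inter_univ]
    calc sIn G A u + sIn G B v ≤ (S ∩ A).card + (S ∩ B).card := Nat.add_le_add h1 h2
      _ = ((S ∩ A) ∪ (S ∩ B)).card := (Finset.card_union_of_disjoint hdisjS).symm
      _ = S.card := by rw [hun]
      _ = gamma G := hcS

/-- First case of the bridge analysis (Section 6.1): the vertex set of `G` is the
disjoint union `A ⊔ B`, `{u,v}` with `u ∈ A`, `v ∈ B` is the unique edge between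
`A` and `B` (a bridge). If `(G[A],u)` acts as AB or `(G[B],v)` acts as AB, then
`γ(G) = s(G[A],u) + s(G[B],v)`. -/
theorem stmt3 {V : Type*} [Fintype V] [DecidableEq V] (G : SimpleGraph V)
    (A B : Finset V) (u v : V)
    (hdisj : Disjoint A B) (hcover : A ∪ B = Finset.univ)
    (hu : u ∈ A) (hv : v ∈ B) (huv : G.Adj u v)
    (hbridge : ∀ a ∈ A, ∀ b ∈ B, G.Adj a b → a = u ∧ b = v)
    (h : ActsAB G A u ∨ ActsAB G B v) :
    gamma G = sIn G A u + sIn G B v := by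
  rcases h with hAB | hBA
  · exact key G A B u v hdisj hcover hu hv huv hbridge hAB
  · rw [add_comm]
    exact key G B A v u hdisj.symm (by rw [Finset.union_comm]; exact hcover) hv hu huv.symm
      (fun b hb a ha hadj => (hbridge a ha b hb hadj.symm).symm) hBA
end

section
/- Let G be a finite simple graph with an edge {u,v} whose vertex set is the disjoint union A ⊔ B with u ∈ A and v ∈ B, such that {u,v} is the only edge of G between A and B (i.e. {u,v} is a bridge); let G₁ = G[A] and G₂ = G[B]. If (G₁,u) has a minimum rooted dominating set that contains or dominates u, and (G₂,v) has a minimum rooted dominating set that contains or dominates v (i.e. each side acts as AB or LR), then γ(G) = s(G₁,u) + s(G₂,v). -/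
/-- The 'both sides act as AB or LR' case of the bridge analysis (Section 6.1):
the vertex set of `G` is the disjoint union `A ⊔ B`, `{u,v}` with `u ∈ A`, `v ∈ B`
is the unique edge between `A` and `B` (a bridge). If `(G[A],u)` has a minimum
rooted dominating set that contains or dominates `u`, and similarly for `(G[B],v)`
and `v`, then `γ(G) = s(G[A],u) + s(G[B],v)`. -/
theorem stmt4 {V : Type*} [Fintype V] [DecidableEq V] (G : SimpleGraph V)
    (A B : Finset V) (u v : V)
    (hdisj : Disjoint A B) (hcover : A ∪ B = Finset.univ)
    (hu : u ∈ A) (hv : v ∈ B) (huv : G.Adj u v)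
    (hbridge : ∀ a ∈ A, ∀ b ∈ B, G.Adj a b → a = u ∧ b = v)
    (h₁ : ∃ S : Finset V, RootedDomSetIn G A u S ∧ S.card = sIn G A u ∧
      (u ∈ S ∨ ∃ w ∈ S, G.Adj w u))
    (h₂ : ∃ S : Finset V, RootedDomSetIn G B v S ∧ S.card = sIn G B v ∧
      (v ∈ S ∨ ∃ w ∈ S, G.Adj w v)) :
    gamma G = sIn G A u + sIn G B v := by
  obtain ⟨S₁, hS₁, hc₁, hd₁⟩ := h₁
  obtain ⟨S₂, hS₂, hc₂, hd₂⟩ := h₂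
  have hsub₁ := hS₁.1
  have hsub₂ := hS₂.1
  have hdisjS : Disjoint S₁ S₂ := hdisj.mono hsub₁ hsub₂
  -- upper bound
  have hdom : DomSet G (S₁ ∪ S₂) := by
    intro x
    have hx : x ∈ A ∪ B := by rw [hcover]; exact Finset.mem_univ x
    rcases Finset.mem_union.mp hx with hxA | hxB
    · by_cases hxu : x = u
      · subst hxu
        rcases hd₁ with h | ⟨w, hw, hadj⟩
        · exact Or.inl (Finset.mem_union_left _ h)
        · exact Or.inr ⟨w, Finset.mem_union_left _ hw, hadj⟩
      · rcases hS₁.2 x hxA hxu with h | ⟨w, hw, hadj⟩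
        · exact Or.inl (Finset.mem_union_left _ h)
        · exact Or.inr ⟨w, Finset.mem_union_left _ hw, hadj⟩
    · by_cases hxv : x = v
      · subst hxv
        rcases hd₂ with h | ⟨w, hw, hadj⟩
        · exact Or.inl (Finset.mem_union_right _ h)
        · exact Or.inr ⟨w, Finset.mem_union_right _ hw, hadj⟩
      · rcases hS₂.2 x hxB hxv with h | ⟨w, hw, hadj⟩
        · exact Or.inl (Finset.mem_union_right _ h)
        · exact Or.inr ⟨w, Finset.mem_union_right _ hw, hadj⟩
  have hub : gamma G ≤ sIn G A u + sIn G B v := by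
    have : (S₁ ∪ S₂).card = sIn G A u + sIn G B v := by
      rw [Finset.card_union_of_disjoint hdisjS, hc₁, hc₂]
    exact Nat.sInf_le ⟨S₁ ∪ S₂, hdom, this⟩
  -- lower bound
  have hne : {n | ∃ S : Finset V, DomSet G S ∧ S.card = n}.Nonempty :=
    ⟨Finset.univ.card, Finset.univ, fun x => Or.inl (Finset.mem_univ x), rfl⟩
  obtain ⟨S, hS, hScard⟩ := Nat.sInf_mem hne
  -- rooted dom on A side
  have hA : RootedDomSetIn G A u (S ∩ A) := by
    refine ⟨Finset.inter_subset_right, fun x hxC hxr => ?_⟩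
    rcases hS x with h | ⟨w, hw, hadj⟩
    · exact Or.inl (Finset.mem_inter.mpr ⟨h, hxC⟩)
    · have hwAB : w ∈ A ∪ B := by rw [hcover]; exact Finset.mem_univ w
      rcases Finset.mem_union.mp hwAB with hwA | hwB
      · exact Or.inr ⟨w, Finset.mem_inter.mpr ⟨hw, hwA⟩, hadj⟩
      · exact absurd (hbridge x hxC w hwB hadj.symm).1 hxr
  have hB : RootedDomSetIn G B v (S ∩ B) := by
    refine ⟨Finset.inter_subset_right, fun x hxC hxr => ?_⟩
    rcases hS x with h | ⟨w, hw, hadj⟩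
    · exact Or.inl (Finset.mem_inter.mpr ⟨h, hxC⟩)
    · have hwAB : w ∈ A ∪ B := by rw [hcover]; exact Finset.mem_univ w
      rcases Finset.mem_union.mp hwAB with hwA | hwB
      · exact absurd (hbridge w hwA x hxC hadj).2 hxr
      · exact Or.inr ⟨w, Finset.mem_inter.mpr ⟨hw, hwB⟩, hadj⟩
  have hlA : sIn G A u ≤ (S ∩ A).card := Nat.sInf_le ⟨S ∩ A, hA, rfl⟩
  have hlB : sIn G B v ≤ (S ∩ B).card := Nat.sInf_le ⟨S ∩ B, hB, rfl⟩
  have hsplit : (S ∩ A).card + (S ∩ B).card = S.card := by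
    rw [← Finset.card_union_of_disjoint (hdisj.mono Finset.inter_subset_right
      Finset.inter_subset_right), ← Finset.inter_union_distrib_left, hcover,
      Finset.inter_univ]
  have hlb : sIn G A u + sIn G B v ≤ gamma G := by
    calc sIn G A u + sIn G B v ≤ (S ∩ A).card + (S ∩ B).card := Nat.add_le_add hlA hlB
    _ = S.card := hsplit
    _ = gamma G := hScard
  omega
end

section
/- Let G be a finite simple graph whose vertex set is A ∪ B with A ∩ B = {u, v} for two distinct vertices u, v, such that G has no edge between A ∖ {u,v} and B ∖ {u,v}. If S₁ ⊆ A is a dominating set of the induced subgraph G[A] and S₂ ⊆ B is a set such that every vertex of B ∖ {u,v} is in S₂ or adjacent in G[B] to a vertex of S₂, then S₁ ∪ S₂ is a dominating set of G. In particular, γ(G) ≤ γ(G[A]) + s(G[B],u,v). -/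
/-- `S` is a dominating set of the induced subgraph `G[A]`:
`S ⊆ A` and every vertex of `A` is in `S` or adjacent (within `A`) to a vertex of `S`. -/
def DomSetIn {V : Type*} (G : SimpleGraph V) (A : Finset V) (S : Finset V) : Prop :=
  S ⊆ A ∧ ∀ v ∈ A, v ∈ S ∨ ∃ w ∈ S, G.Adj w v

/-- `γ(G[A])`: the minimum size of a dominating set of the induced subgraph `G[A]`. -/
noncomputable def gammaIn {V : Type*} (G : SimpleGraph V) (A : Finset V) : ℕ :=
  sInf {n | ∃ S : Finset V, DomSetIn G A S ∧ S.card = n}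

/-- `S` is a rooted dominating set of `(G[B], u, v)`: `S ⊆ B` and every vertex of `B`
other than `u` and `v` is in `S` or adjacent (within `B`) to a vertex of `S`. -/
def RootedDomSetIn2 {V : Type*} (G : SimpleGraph V) (B : Finset V) (u v : V)
    (S : Finset V) : Prop :=
  S ⊆ B ∧ ∀ x ∈ B, x ≠ u → x ≠ v → (x ∈ S ∨ ∃ w ∈ S, G.Adj w x)

/-- `s(G[B], u, v)`: the minimum size of a rooted dominating set of `(G[B], u, v)`. -/
noncomputable def sIn2 {V : Type*} (G : SimpleGraph V) (B : Finset V) (u v : V) : ℕ :=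
  sInf {n | ∃ S : Finset V, RootedDomSetIn2 G B u v S ∧ S.card = n}

/-- Lemma 3 (attaching along two vertices): if the vertex set of `G` is `A ∪ B` with
`A ∩ B = {u, v}` and no edge between `A ∖ {u,v}` and `B ∖ {u,v}`, then the union of a
dominating set of `G[A]` and a rooted dominating set of `(G[B],u,v)` dominates `G`;
in particular `γ(G) ≤ γ(G[A]) + s(G[B],u,v)`. -/
theorem stmt6 {V : Type*} [Fintype V] [DecidableEq V] (G : SimpleGraph V)
    (A B : Finset V) (u v : V) (huv : u ≠ v)
    (hcover : A ∪ B = Finset.univ) (hinter : A ∩ B = {u, v})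
    (hsep : ∀ a ∈ A, ∀ b ∈ B, a ∉ ({u, v} : Finset V) → b ∉ ({u, v} : Finset V) →
      ¬ G.Adj a b) :
    (∀ S₁ S₂ : Finset V, DomSetIn G A S₁ → RootedDomSetIn2 G B u v S₂ →
      DomSet G (S₁ ∪ S₂)) ∧
    gamma G ≤ gammaIn G A + sIn2 G B u v := by
  have huA : u ∈ A := by
    have : u ∈ A ∩ B := by rw [hinter]; simp
    exact (Finset.mem_inter.mp this).1
  have hvA : v ∈ A := by
    have : v ∈ A ∩ B := by rw [hinter]; simp
    exact (Finset.mem_inter.mp this).1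
  have hmain : ∀ S₁ S₂ : Finset V, DomSetIn G A S₁ → RootedDomSetIn2 G B u v S₂ →
      DomSet G (S₁ ∪ S₂) := by
    intro S₁ S₂ h₁ h₂ x
    have hx : x ∈ A ∪ B := by rw [hcover]; exact Finset.mem_univ x
    rcases Finset.mem_union.mp hx with hxA | hxB
    · rcases h₁.2 x hxA with h | ⟨w, hw, hadj⟩
      · exact Or.inl (Finset.mem_union_left _ h)
      · exact Or.inr ⟨w, Finset.mem_union_left _ hw, hadj⟩
    · by_cases hxu : x = u
      · subst hxu
        rcases h₁.2 x huA with h | ⟨w, hw, hadj⟩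
        · exact Or.inl (Finset.mem_union_left _ h)
        · exact Or.inr ⟨w, Finset.mem_union_left _ hw, hadj⟩
      · by_cases hxv : x = v
        · subst hxv
          rcases h₁.2 x hvA with h | ⟨w, hw, hadj⟩
          · exact Or.inl (Finset.mem_union_left _ h)
          · exact Or.inr ⟨w, Finset.mem_union_left _ hw, hadj⟩
        · rcases h₂.2 x hxB hxu hxv with h | ⟨w, hw, hadj⟩
          · exact Or.inl (Finset.mem_union_right _ h)
          · exact Or.inr ⟨w, Finset.mem_union_right _ hw, hadj⟩
  refine ⟨hmain, ?_⟩
  have hne₁ : {n | ∃ S : Finset V, DomSetIn G A S ∧ S.card = n}.Nonempty :=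
    ⟨A.card, A, ⟨Finset.Subset.refl A, fun x hx => Or.inl hx⟩, rfl⟩
  have hne₂ : {n | ∃ S : Finset V, RootedDomSetIn2 G B u v S ∧ S.card = n}.Nonempty :=
    ⟨B.card, B, ⟨Finset.Subset.refl B, fun x hx _ _ => Or.inl hx⟩, rfl⟩
  obtain ⟨S₁, h₁, hc₁⟩ := Nat.sInf_mem hne₁
  obtain ⟨S₂, h₂, hc₂⟩ := Nat.sInf_mem hne₂
  have hdom := hmain S₁ S₂ h₁ h₂
  calc gamma G ≤ (S₁ ∪ S₂).card := Nat.sInf_le ⟨S₁ ∪ S₂, hdom, rfl⟩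
    _ ≤ S₁.card + S₂.card := Finset.card_union_le _ _
    _ = gammaIn G A + sIn2 G B u v := by rw [hc₁, hc₂]; rfl
end

section
/- Let G be a finite simple graph with a vertex u, and let H be the graph obtained from G by adding two new vertices a and b together with the three edges {a,b}, {a,u}, {b,u} (fusing a triangle, the 'small AB' gadget, to u). Then γ(H) equals the minimum size of a dominating set of G that contains u. -/
/-- The graph `H` obtained from `G` by fusing the 'small AB' gadget to `u`:
two new vertices `a = Sum.inr 0` and `b = Sum.inr 1` are added, together with the
three edges `{a,b}`, `{a,u}`, `{b,u}`. -/
def fuseAB {V : Type*} (G : SimpleGraph V) (u : V) : SimpleGraph (V ⊕ Fin 2) :=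
  SimpleGraph.fromRel fun x y =>
    match x, y with
    | Sum.inl a, Sum.inl b => G.Adj a b
    | Sum.inl a, Sum.inr _ => a = u
    | Sum.inr _, Sum.inr _ => True
    | _, _ => False

lemma fuseAB_adj_ll {V : Type*} (G : SimpleGraph V) (u : V) (a b : V) :
    (fuseAB G u).Adj (Sum.inl a) (Sum.inl b) ↔ G.Adj a b := by
  simp only [fuseAB, SimpleGraph.fromRel_adj]
  constructor
  · rintro ⟨_, h | h⟩; exact h; exact h.symm
  · intro h; exact ⟨by simp [h.ne], Or.inl h⟩

lemma fuseAB_adj_lr {V : Type*} (G : SimpleGraph V) (u : V) (a : V) (i : Fin 2) :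
    (fuseAB G u).Adj (Sum.inl a) (Sum.inr i) ↔ a = u := by
  simp only [fuseAB, SimpleGraph.fromRel_adj]
  constructor
  · rintro ⟨_, h | h⟩; exact h; exact h.elim
  · intro h; exact ⟨by simp, Or.inl h⟩

/-- Part (1) of Lemma 1 (Forcing): `γ` of the graph obtained from `G` by fusing a
small AB gadget to `u` equals the minimum size of a dominating set of `G`
containing `u`. -/
theorem stmt8 {V : Type*} [Fintype V] (G : SimpleGraph V) (u : V) :
    gamma (fuseAB G u) =
      sInf {n | ∃ S : Finset V, DomSet G S ∧ u ∈ S ∧ S.card = n} := by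
  classical
  -- an element of each set
  have hQne : {n | ∃ S : Finset V, DomSet G S ∧ u ∈ S ∧ S.card = n}.Nonempty := by
    refine ⟨(Finset.univ : Finset V).card, Finset.univ, ?_, Finset.mem_univ u, rfl⟩
    intro v; exact Or.inl (Finset.mem_univ v)
  have hPne : {n | ∃ S : Finset (V ⊕ Fin 2), DomSet (fuseAB G u) S ∧ S.card = n}.Nonempty := by
    refine ⟨(Finset.univ : Finset (V ⊕ Fin 2)).card, Finset.univ, ?_, rfl⟩
    intro v; exact Or.inl (Finset.mem_univ v)
  apply le_antisymm
  · -- gamma H ≤ sInf Q : take a minimal S for Q, map into H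
    obtain ⟨S, hS, huS, hcard⟩ := Nat.sInf_mem hQne
    apply Nat.sInf_le
    refine ⟨S.image Sum.inl, ?_, by
      rw [Finset.card_image_of_injective _ Sum.inl_injective]; exact hcard⟩
    intro v
    match v with
    | Sum.inl v =>
      rcases hS v with h | ⟨w, hw, hadj⟩
      · exact Or.inl (Finset.mem_image_of_mem _ h)
      · exact Or.inr ⟨Sum.inl w, Finset.mem_image_of_mem _ hw,
          (fuseAB_adj_ll G u w v).2 hadj⟩
    | Sum.inr i =>
      exact Or.inr ⟨Sum.inl u, Finset.mem_image_of_mem _ huS,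
        (fuseAB_adj_lr G u u i).2 rfl⟩
  · -- sInf Q ≤ gamma H
    obtain ⟨T, hT, hcard⟩ := Nat.sInf_mem hPne
    rw [gamma, ← hcard]
    set f : V ⊕ Fin 2 → V := Sum.elim id (fun _ => u) with hf
    set S : Finset V := T.image f with hSdef
    -- u ∈ S
    have huS : u ∈ S := by
      rcases hT (Sum.inr 0) with h | ⟨w, hw, hadj⟩
      · exact Finset.mem_image.2 ⟨Sum.inr 0, h, rfl⟩
      · match w with
        | Sum.inl w =>
          have : w = u := (fuseAB_adj_lr G u w 0).1 hadj
          exact Finset.mem_image.2 ⟨Sum.inl w, hw, this⟩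
        | Sum.inr j => exact Finset.mem_image.2 ⟨Sum.inr j, hw, rfl⟩
    have hSdom : DomSet G S := by
      intro v
      rcases hT (Sum.inl v) with h | ⟨w, hw, hadj⟩
      · exact Or.inl (Finset.mem_image.2 ⟨Sum.inl v, h, rfl⟩)
      · match w with
        | Sum.inl w =>
          exact Or.inr ⟨w, Finset.mem_image.2 ⟨Sum.inl w, hw, rfl⟩,
            (fuseAB_adj_ll G u w v).1 hadj⟩
        | Sum.inr j =>
          have : v = u := ((fuseAB_adj_lr G u v j).1 hadj.symm)
          exact Or.inl (this ▸ huS)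
    calc sInf {n | ∃ S : Finset V, DomSet G S ∧ u ∈ S ∧ S.card = n}
        ≤ S.card := Nat.sInf_le ⟨S, hSdom, huS, rfl⟩
      _ ≤ T.card := Finset.card_image_le
end

section
/- Every finite simple graph G has a minimum dominating set S that is neat, i.e. such that for every u ∈ S there is no vertex v of G with N[u] ⊊ N[v]. Moreover, any minimum dominating set S maximizing the sum over u ∈ S of |N[u]| is neat. -/
/-- The closed neighborhood `N[u]` of `u`: `u` together with its neighbors. -/
def closedNbhd {V : Type*} [Fintype V] [DecidableEq V] (G : SimpleGraph V)
    [DecidableRel G.Adj] (u : V) : Finset V :=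
  insert u (G.neighborFinset u)

/-- `S` is neat: for every `u ∈ S` there is no vertex `v` with `N[u] ⊊ N[v]`. -/
def Neat {V : Type*} [Fintype V] [DecidableEq V] (G : SimpleGraph V)
    [DecidableRel G.Adj] (S : Finset V) : Prop :=
  ∀ u ∈ S, ¬ ∃ v : V, closedNbhd G u ⊂ closedNbhd G v

lemma mem_closedNbhd {V : Type*} [Fintype V] [DecidableEq V] (G : SimpleGraph V)
    [DecidableRel G.Adj] {u w : V} : w ∈ closedNbhd G u ↔ w = u ∨ G.Adj u w := by
  simp [closedNbhd]

lemma gamma_mem {V : Type*} [Fintype V] (G : SimpleGraph V) :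
    ∃ S : Finset V, DomSet G S ∧ S.card = gamma G := by
  have hne : {n | ∃ S : Finset V, DomSet G S ∧ S.card = n}.Nonempty :=
    ⟨(Finset.univ : Finset V).card, Finset.univ, fun v => Or.inl (Finset.mem_univ v), rfl⟩
  exact Nat.sInf_mem hne

lemma key_s12 {V : Type*} [Fintype V] [DecidableEq V] (G : SimpleGraph V)
    [DecidableRel G.Adj] (S : Finset V) (hdom : DomSet G S) (hcard : S.card = gamma G)
    (hmax : ∀ T : Finset V, DomSet G T → T.card = gamma G →
      ∑ u ∈ T, (closedNbhd G u).card ≤ ∑ u ∈ S, (closedNbhd G u).card) :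
    Neat G S := by
  intro u hu ⟨v, hsub⟩
  have huv : u ≠ v := by
    rintro rfl; exact (lt_irrefl _ hsub)
  set T : Finset V := insert v (S.erase u) with hT
  have hsubset : closedNbhd G u ⊆ closedNbhd G v := hsub.1
  have hdomT : DomSet G T := by
    intro w
    rcases hdom w with hw | ⟨x, hx, hadj⟩
    · by_cases hwu : w = u
      · subst hwu
        have : w ∈ closedNbhd G v := hsubset ((mem_closedNbhd G).2 (Or.inl rfl))
        rcases (mem_closedNbhd G).1 this with rfl | hadj
        · exact Or.inl (Finset.mem_insert_self _ _)
        · exact Or.inr ⟨v, Finset.mem_insert_self _ _, hadj⟩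
      · exact Or.inl (Finset.mem_insert_of_mem (Finset.mem_erase.2 ⟨hwu, hw⟩))
    · by_cases hxu : x = u
      · subst hxu
        have : w ∈ closedNbhd G v :=
          hsubset ((mem_closedNbhd G).2 (Or.inr hadj))
        rcases (mem_closedNbhd G).1 this with rfl | hadj'
        · exact Or.inl (Finset.mem_insert_self _ _)
        · exact Or.inr ⟨v, Finset.mem_insert_self _ _, hadj'⟩
      · exact Or.inr ⟨x, Finset.mem_insert_of_mem (Finset.mem_erase.2 ⟨hxu, hx⟩), hadj⟩
  have hle : gamma G ≤ T.card := Nat.sInf_le ⟨T, hdomT, rfl⟩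
  have hcardpos : 0 < S.card := Finset.card_pos.2 ⟨u, hu⟩
  have hvnot : v ∉ S.erase u := by
    intro hv
    have hTeq : T = S.erase u := Finset.insert_eq_self.2 hv
    have : T.card = S.card - 1 := by rw [hTeq, Finset.card_erase_of_mem hu]
    omega
  have hTcard : T.card = gamma G := by
    have : T.card = (S.erase u).card + 1 := Finset.card_insert_of_notMem hvnot
    rw [Finset.card_erase_of_mem hu] at this
    omega
  have hsum := hmax T hdomT hTcard
  have hsumT : ∑ x ∈ T, (closedNbhd G x).card
      = (closedNbhd G v).card + ∑ x ∈ S.erase u, (closedNbhd G x).card :=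
    Finset.sum_insert hvnot
  have hsumS : (closedNbhd G u).card + ∑ x ∈ S.erase u, (closedNbhd G x).card
      = ∑ x ∈ S, (closedNbhd G x).card := Finset.add_sum_erase S (fun x => (closedNbhd G x).card) hu
  have hlt : (closedNbhd G u).card < (closedNbhd G v).card := Finset.card_lt_card hsub
  omega

/-- Lemma 12: every finite simple graph has a minimum dominating set that is neat;
moreover, any minimum dominating set maximizing `∑_{u ∈ S} |N[u]|` is neat. -/
theorem stmt12 {V : Type*} [Fintype V] [DecidableEq V] (G : SimpleGraph V)
    [DecidableRel G.Adj] :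
    (∃ S : Finset V, DomSet G S ∧ S.card = gamma G ∧ Neat G S) ∧
    (∀ S : Finset V, DomSet G S → S.card = gamma G →
      (∀ T : Finset V, DomSet G T → T.card = gamma G →
        ∑ u ∈ T, (closedNbhd G u).card ≤ ∑ u ∈ S, (closedNbhd G u).card) →
      Neat G S) := by
  classical
  constructor
  · obtain ⟨S₀, hdom₀, hcard₀⟩ := gamma_mem G
    set A : Finset (Finset V) :=
      Finset.univ.filter (fun S => DomSet G S ∧ S.card = gamma G) with hA
    have hS₀A : S₀ ∈ A := by simp [hA, hdom₀, hcard₀]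
    obtain ⟨S, hSA, hSmax⟩ := A.exists_max_image
      (fun S => ∑ u ∈ S, (closedNbhd G u).card) ⟨S₀, hS₀A⟩
    have hS : DomSet G S ∧ S.card = gamma G := by
      simpa [hA] using hSA
    refine ⟨S, hS.1, hS.2, key_s12 G S hS.1 hS.2 ?_⟩
    intro T hdomT hcardT
    exact hSmax T (by simp [hA, hdomT, hcardT])
  · intro S hdom hcard hmax
    exact key_s12 G S hdom hcard hmax
end

section
/- Let G be a finite simple graph, let S be a neat dominating set of G, and let u, a be vertices of G such that every vertex w ∈ N[a] with w ≠ u satisfies N[w] ⊊ N[u]. Then u ∈ S. -/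
/-- The forcing mechanism of Section 5.6 / Lemma 13: if `S` is a neat dominating set
and `u`, `a` are vertices such that every vertex `w ∈ N[a]` with `w ≠ u` satisfies
`N[w] ⊊ N[u]`, then `u ∈ S`. -/
theorem stmt13 {V : Type*} [Fintype V] [DecidableEq V] (G : SimpleGraph V)
    [DecidableRel G.Adj] (S : Finset V) (hS : DomSet G S) (hneat : Neat G S)
    (u a : V)
    (h : ∀ w ∈ closedNbhd G a, w ≠ u → closedNbhd G w ⊂ closedNbhd G u) :
    u ∈ S := by
  obtain ⟨w, hwS, hwa⟩ : ∃ w ∈ S, w ∈ closedNbhd G a := by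
    rcases hS a with haS | ⟨w, hwS, hadj⟩
    · exact ⟨a, haS, by simp [closedNbhd]⟩
    · exact ⟨w, hwS, by simp [closedNbhd, hadj.symm]⟩
  by_cases hwu : w = u
  · exact hwu ▸ hwS
  · exact absurd ⟨u, h w hwa hwu⟩ (hneat w hwS)
end
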